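/- Let α ∈ F_8 be a root of T^3 + T^2 + 1 and let {a_1,a_2,a_3} = {α, α^2+α, α^2+α+1}. The polynomial F = Y·(X + Y + α)·Π_{i=1}^3 (X - a_i) has exactly 14 zeros among the 22 points of the Klein quartic V(Y^3 + X^3Y + X) over F_8, so its evaluation vector has Hamming weight 8. -/
import Mathlib

abbrev V8 := ZMod 2 × ZMod 2 × ZMod 2

noncomputable def c8 : ZMod 2 →+* GaloisField 2 3 := ZMod.castHom dvd_rfl _

/-- multiplication on coordinates modelling GF(8) with t^3 = t^2 + 1 -/
def vmul (u v : V8) : V8 :=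
  (u.1*v.1 - u.2.1*v.2.2 - u.2.2*v.2.1 + u.2.2*v.2.2,
   u.1*v.2.1 + u.2.1*v.1 - u.2.2*v.2.2,
   u.1*v.2.2 + u.2.1*v.2.1 + u.2.2*v.1 - u.2.1*v.2.2 - u.2.2*v.2.1 + u.2.2*v.2.2)

noncomputable def phi (α : GaloisField 2 3) (v : V8) : GaloisField 2 3 :=
  c8 v.1 + c8 v.2.1 * α + c8 v.2.2 * α ^ 2

lemma phi_mul (α : GaloisField 2 3) (hα : α ^ 3 + α ^ 2 + 1 = 0) (v w : V8) :
    phi α (vmul v w) = phi α v * phi α w := by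
  simp only [phi, vmul, map_add, map_mul, map_sub]
  linear_combination (-(c8 v.2.1 * c8 w.2.2 + c8 v.2.2 * c8 w.2.1
      + c8 v.2.2 * c8 w.2.2 * (α - 1))) * hα

lemma phi_add (α : GaloisField 2 3) (v w : V8) : phi α (v + w) = phi α v + phi α w := by
  simp only [phi, Prod.fst_add, Prod.snd_add, map_add]; ring

lemma phi_sub (α : GaloisField 2 3) (v w : V8) : phi α (v - w) = phi α v - phi α w := by
  simp only [phi, Prod.fst_sub, Prod.snd_sub, map_sub]; ring

lemma phi_zero (α : GaloisField 2 3) : phi α 0 = 0 := by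
  simp [phi]

lemma phi_inj (α : GaloisField 2 3) (hα : α ^ 3 + α ^ 2 + 1 = 0) :
    Function.Injective (phi α) := by
  have h2 : (2 : GaloisField 2 3) = 0 := by
    have := CharP.cast_eq_zero (GaloisField 2 3) 2
    simpa using this
  have hz : ∀ x : ZMod 2, x = 0 ∨ x = 1 := by decide
  have hker : ∀ u : V8, phi α u = 0 → u = 0 := by
    rintro ⟨a, b, c⟩ hu
    rcases hz a with rfl | rfl <;> rcases hz b with rfl | rfl <;> rcases hz c with rfl | rfl <;>
      simp only [phi, map_zero, map_one, zero_mul, one_mul, zero_add, add_zero] at hu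
    · rfl
    -- (0,0,1) : α^2
    · exact absurd (by linear_combination (1+α) * hu + hα + (-α^2-α^3) * h2)
        (one_ne_zero (α := GaloisField 2 3))
    -- (0,1,0) : α
    · exact absurd (by linear_combination (α+α^2) * hu + hα + (-α^2-α^3) * h2)
        (one_ne_zero (α := GaloisField 2 3))
    -- (0,1,1) : α + α^2
    · exact absurd (by linear_combination α * hu + hα + (-α^2-α^3) * h2)
        (one_ne_zero (α := GaloisField 2 3))
    -- (1,0,0) : 1
    · exact absurd hu (one_ne_zero (α := GaloisField 2 3))
    -- (1,0,1) : 1 + α^2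
    · exact absurd (by linear_combination (1+α+α^2) * hu + α * hα + (-α-α^2-α^3-α^4) * h2)
        (one_ne_zero (α := GaloisField 2 3))
    -- (1,1,0) : 1 + α
    · exact absurd (by linear_combination α^2 * hu + hα + (-α^2-α^3) * h2)
        (one_ne_zero (α := GaloisField 2 3))
    -- (1,1,1) : 1 + α + α^2
    · exact absurd (by linear_combination (1+α^2) * hu + α * hα + (-α-α^2-α^3-α^4) * h2)
        (one_ne_zero (α := GaloisField 2 3))
  intro v w h
  have : v - w = 0 := hker _ (by rw [phi_sub, h, sub_self])
  exact sub_eq_zero.mp this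

lemma phi_surj (α : GaloisField 2 3) (hα : α ^ 3 + α ^ 2 + 1 = 0) :
    Function.Surjective (phi α) := by
  haveI : Fintype (GaloisField 2 3) := Fintype.ofFinite _
  have h1 : Fintype.card V8 = 8 := by decide
  have h2 : Fintype.card (GaloisField 2 3) = 8 := by
    rw [← Nat.card_eq_fintype_card, GaloisField.card 2 3 (by norm_num)]; norm_num
  exact ((Fintype.bijective_iff_injective_and_card (phi α)).2
    ⟨phi_inj α hα, by rw [h1, h2]⟩).surjective

def kval (q : V8 × V8) : V8 :=
  vmul (vmul q.2 q.2) q.2 + vmul (vmul (vmul q.1 q.1) q.1) q.2 + q.1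

def fval (q : V8 × V8) : V8 :=
  vmul (vmul q.2 (q.1 + q.2 + ((0:ZMod 2),(1:ZMod 2),(0:ZMod 2))))
    (vmul (vmul (q.1 - ((0:ZMod 2),(1:ZMod 2),(0:ZMod 2)))
      (q.1 - ((0:ZMod 2),(1:ZMod 2),(1:ZMod 2))))
      (q.1 - ((1:ZMod 2),(1:ZMod 2),(1:ZMod 2))))

lemma phi_kval (α : GaloisField 2 3) (hα : α ^ 3 + α ^ 2 + 1 = 0) (q : V8 × V8) :
    phi α (kval q) = (phi α q.2) ^ 3 + (phi α q.1) ^ 3 * phi α q.2 + phi α q.1 := by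
  simp only [kval, phi_add α, phi_mul α hα]; ring

lemma phi_fval (α : GaloisField 2 3) (hα : α ^ 3 + α ^ 2 + 1 = 0) (q : V8 × V8) :
    phi α (fval q) = phi α q.2 * (phi α q.1 + phi α q.2 + α) *
      ((phi α q.1 - α) * (phi α q.1 - (α ^ 2 + α)) * (phi α q.1 - (α ^ 2 + α + 1))) := by
  have hA : phi α ((0:ZMod 2),(1:ZMod 2),(0:ZMod 2)) = α := by
    simp [phi]
  have hA2 : phi α ((0:ZMod 2),(1:ZMod 2),(1:ZMod 2)) = α ^ 2 + α := by
    simp only [phi, map_zero, map_one, zero_mul, one_mul, zero_add]; ring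
  have hA3 : phi α ((1:ZMod 2),(1:ZMod 2),(1:ZMod 2)) = α ^ 2 + α + 1 := by
    simp only [phi, map_zero, map_one, zero_mul, one_mul, zero_add]; ring
  simp only [fval, phi_mul α hα, phi_add α, phi_sub α, hA, hA2, hA3]

theorem stmt15 (α : GaloisField 2 3) (hα : α ^ 3 + α ^ 2 + 1 = 0) :
    let K := GaloisField 2 3
    let klein : K × K → Prop := fun p => p.2 ^ 3 + p.1 ^ 3 * p.2 + p.1 = 0
    let f : K × K → K := fun p =>
      p.2 * (p.1 + p.2 + α) *
        ((p.1 - α) * (p.1 - (α ^ 2 + α)) * (p.1 - (α ^ 2 + α + 1)))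
    {p : K × K | klein p}.ncard = 22 ∧
    {p : K × K | klein p ∧ f p = 0}.ncard = 14 ∧
    {p : K × K | klein p ∧ f p ≠ 0}.ncard = 8 := by
  intro K klein f
  have hinj := phi_inj α hα
  have hsurj := phi_surj α hα
  have hpinj : Function.Injective (fun q : V8 × V8 => (phi α q.1, phi α q.2)) := by
    rintro ⟨a, b⟩ ⟨c, d⟩ h
    simp only [Prod.mk.injEq] at h
    exact Prod.ext (hinj h.1) (hinj h.2)
  have hzero : ∀ u : V8, phi α u = 0 ↔ u = 0 := fun u =>
    ⟨fun h => hinj (by rw [h, phi_zero]), fun h => by rw [h, phi_zero]⟩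
  have hklein : ∀ q : V8 × V8, klein (phi α q.1, phi α q.2) ↔ kval q = 0 := by
    intro q
    rw [← hzero (kval q), phi_kval α hα]
  have hf : ∀ q : V8 × V8, f (phi α q.1, phi α q.2) = 0 ↔ fval q = 0 := by
    intro q
    rw [← hzero (fval q), phi_fval α hα]
  have key : ∀ (P : K × K → Prop) (Q : V8 × V8 → Prop),
      (∀ q : V8 × V8, P (phi α q.1, phi α q.2) ↔ Q q) →
      {p : K × K | P p} = (fun q : V8 × V8 => (phi α q.1, phi α q.2)) '' {q | Q q} := by
    intro P Q h
    ext ⟨x, y⟩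
    constructor
    · intro hp
      obtain ⟨v, rfl⟩ := hsurj x
      obtain ⟨w, rfl⟩ := hsurj y
      exact ⟨(v, w), (h (v, w)).1 hp, rfl⟩
    · rintro ⟨q, hq, heq⟩
      exact Set.mem_setOf.2 (heq ▸ (h q).2 hq)
  have e1 : {p : K × K | klein p} =
      (fun q : V8 × V8 => (phi α q.1, phi α q.2)) '' {q | kval q = 0} :=
    key _ _ (fun q => hklein q)
  have e2 : {p : K × K | klein p ∧ f p = 0} =
      (fun q : V8 × V8 => (phi α q.1, phi α q.2)) '' {q | kval q = 0 ∧ fval q = 0} :=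
    key _ _ (fun q => and_congr (hklein q) (hf q))
  have e3 : {p : K × K | klein p ∧ f p ≠ 0} =
      (fun q : V8 × V8 => (phi α q.1, phi α q.2)) '' {q | kval q = 0 ∧ fval q ≠ 0} :=
    key _ _ (fun q => and_congr (hklein q) (not_congr (hf q)))
  rw [e1, e2, e3, Set.ncard_image_of_injective _ hpinj, Set.ncard_image_of_injective _ hpinj,
    Set.ncard_image_of_injective _ hpinj]
  refine ⟨?_, ?_, ?_⟩
  · have : {q : V8 × V8 | kval q = 0} =
        ↑(Finset.univ.filter (fun q : V8 × V8 => kval q = 0)) := by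
      ext q; simp
    rw [this, Set.ncard_coe_finset]
    decide
  · have : {q : V8 × V8 | kval q = 0 ∧ fval q = 0} =
        ↑(Finset.univ.filter (fun q : V8 × V8 => kval q = 0 ∧ fval q = 0)) := by
      ext q; simp
    rw [this, Set.ncard_coe_finset]
    decide
  · have : {q : V8 × V8 | kval q = 0 ∧ fval q ≠ 0} =
        ↑(Finset.univ.filter (fun q : V8 × V8 => kval q = 0 ∧ fval q ≠ 0)) := by
      ext q; simp
    rw [this, Set.ncard_coe_finset]
    decide
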